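/- arXiv:0909.2817 — 6 statements merged into one kernel-verified Lean document; each statement's English description precedes it below -/
import Mathlib

section
/- In the Boolean lattice B_n, any recovering set R satisfies |R| ≤ √3 · 2^{0.4392 n}. -/
/-- `R` is a recovering set in the Boolean lattice `B_n`. -/
def IsRecovering {n : ℕ} (R : Finset (Finset (Fin n))) : Prop :=
  (∀ a1 ∈ R, ∀ a2 ∈ R, ∀ a3 ∈ R, ∀ a4 ∈ R,
    a1 ≠ a2 → a1 ≠ a3 → a1 ≠ a4 → a2 ≠ a3 → a2 ≠ a4 → a3 ≠ a4 →
      a1 ∩ a2 ≠ a3 ∩ a4 ∧ a1 ∪ a2 ≠ a3 ∪ a4) ∧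
  (∀ a1 ∈ R, ∀ a2 ∈ R, ∀ a3 ∈ R, a1 ≠ a2 → a1 ≠ a3 → a2 ≠ a3 →
      a1 ∩ a2 ≠ a1 ∩ a3 ∧ a1 ∪ a2 ≠ a1 ∪ a3)

/-!
Let `D = |R|(|R| - 1)` be the number of ordered pairs of distinct members of `R`. For a recovering
set the maps `(a, b) ↦ a ∩ b` and `(a, b) ↦ (a ∪ b)ᶜ` on these pairs are at most two-to-one.
Weighting subsets of `[n]` by a product Bernoulli measure with parameters `βᵢ` and applying AM-GM
to the weights of the `D` meets gives `∏ᵢ βᵢ^cᵢ (1 - βᵢ)^(D - cᵢ) ≤ (2 / D)^D`, where `cᵢ` counts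
the pairs whose meet contains `i`; likewise with parameters `γᵢ` and the counts `dᵢ` of pairs whose
join avoids `i`. If `Kᵢ` members of `R` contain `i` and `Lᵢ` avoid it, then `cᵢ = Kᵢ(Kᵢ - 1)`,
`dᵢ = Lᵢ(Lᵢ - 1)`, so `cᵢ dᵢ ≤ (KᵢLᵢ)²` and `cᵢ + dᵢ + 2KᵢLᵢ = D`, i.e. `√cᵢ + √dᵢ ≤ √D`. On this
region suitable dyadic `βᵢ, γᵢ` make every coordinate factor at least `2^(-7D/4)` (a binary entropy
estimate `H(cᵢ/D) + H(dᵢ/D) ≤ 7/4`). Hence `D⁸ ≤ 2^(7n+8)`, so `|R|¹⁶ ≤ 3⁸ 2^(7n)`, and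
`7/16 < 0.4392`.
-/

open Finset

namespace Finset

lemma sum_comp_le_mul_sum {α β : Type*} [DecidableEq β] [Fintype β] (S : Finset α) (M : α → β)
    {k : ℕ} (hM : ∀ b, #{p ∈ S | M p = b} ≤ k) (g : β → ℝ) (hg : ∀ b, 0 ≤ g b) :
    ∑ p ∈ S, g (M p) ≤ k * ∑ b, g b := by
  rw [sum_comp, mul_sum]
  refine (sum_le_sum fun b _ => ?_).trans
    (sum_le_sum_of_subset_of_nonneg (subset_univ _) fun b _ _ => by have := hg b; positivity)
  rw [nsmul_eq_mul]
  exact mul_le_mul_of_nonneg_right (by exact_mod_cast hM b) (hg b)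

lemma prod_le_div_card_pow_of_sum_le {α : Type*} (S : Finset α) {z : α → ℝ}
    (hz : ∀ p ∈ S, 0 ≤ z p) {B : ℝ} (h : ∑ p ∈ S, z p ≤ B) :
    ∏ p ∈ S, z p ≤ (B / #S) ^ #S := by
  rcases S.eq_empty_or_nonempty with rfl | hS
  · simp
  have hcard : (0 : ℝ) < #S := by exact_mod_cast hS.card_pos
  have hamgm := Real.geom_mean_le_arith_mean_weighted S (fun _ => (#S : ℝ)⁻¹) z
    (fun _ _ => by positivity) (by simp [hcard.ne']) hz
  rw [Real.finsetProd_rpow S z hz, ← mul_sum, inv_mul_eq_div] at hamgm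
  calc ∏ p ∈ S, z p = ((∏ p ∈ S, z p) ^ (#S : ℝ)⁻¹) ^ #S :=
        (Real.rpow_inv_natCast_pow (prod_nonneg hz) hS.card_pos.ne').symm
    _ ≤ (B / #S) ^ #S := by
        gcongr
        · exact Real.rpow_nonneg (prod_nonneg hz) _
        · exact hamgm.trans (by gcongr)

lemma offDiag_card_add_card {α : Type*} (s : Finset α) : #s.offDiag + #s = #s * #s := by
  rw [offDiag_card]
  exact Nat.sub_add_cancel (Nat.le_mul_self _)

lemma offDiag_filter {α : Type*} (s : Finset α) (P : α → Prop) [DecidablePred P] :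
    (s.filter P).offDiag = {p ∈ s.offDiag | P p.1 ∧ P p.2} := by
  ext p
  simp only [mem_offDiag, mem_filter]
  tauto

end Finset

section BernoulliWeight

variable {ι α : Type*} [Fintype ι] [DecidableEq ι]

def bernoulliWeight (u : ι → ℝ) (s : Finset ι) : ℝ := ∏ i, if i ∈ s then u i else 1 - u i

lemma bernoulliWeight_nonneg {u : ι → ℝ} (hu : ∀ i, u i ∈ Set.Icc 0 1) (s : Finset ι) :
    0 ≤ bernoulliWeight u s :=
  prod_nonneg fun i _ => by split_ifs <;> linarith [(hu i).1, (hu i).2]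

lemma sum_bernoulliWeight (u : ι → ℝ) : ∑ s, bernoulliWeight u s = 1 := by
  have h := prod_add u (fun i => 1 - u i) univ
  simp only [add_sub_cancel, prod_const_one, powerset_univ] at h
  rw [h]
  refine sum_congr rfl fun s _ => ?_
  rw [bernoulliWeight, prod_ite]
  congr 2
  · ext; simp
  · ext; simp

lemma prod_bernoulliWeight_comp (S : Finset α) (M : α → Finset ι) (u : ι → ℝ) :
    ∏ p ∈ S, bernoulliWeight u (M p) =
      ∏ i, u i ^ #{p ∈ S | i ∈ M p} * (1 - u i) ^ #{p ∈ S | i ∉ M p} := by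
  simp only [bernoulliWeight]
  rw [prod_comm]
  exact prod_congr rfl fun i _ => by rw [prod_ite, prod_const, prod_const]

lemma prod_pow_mul_pow_le_of_card_fiber_le (S : Finset α) (M : α → Finset ι) {k : ℕ}
    (hM : ∀ s, #{p ∈ S | M p = s} ≤ k) {u : ι → ℝ} (hu : ∀ i, u i ∈ Set.Icc 0 1) :
    ∏ i, u i ^ #{p ∈ S | i ∈ M p} * (1 - u i) ^ #{p ∈ S | i ∉ M p} ≤ (k / #S) ^ #S := by
  rw [← prod_bernoulliWeight_comp]
  refine prod_le_div_card_pow_of_sum_le S (fun p _ => bernoulliWeight_nonneg hu _) ?_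
  simpa [sum_bernoulliWeight] using
    sum_comp_le_mul_sum S M hM (bernoulliWeight u) (bernoulliWeight_nonneg hu)

end BernoulliWeight

section SeparatesPairs

variable {α : Type*} [DecidableEq α] {R : Finset α} {op : α → α → α}

def SeparatesPairs (op : α → α → α) (R : Finset α) : Prop :=
  (∀ a1 ∈ R, ∀ a2 ∈ R, ∀ a3 ∈ R, ∀ a4 ∈ R,
    a1 ≠ a2 → a1 ≠ a3 → a1 ≠ a4 → a2 ≠ a3 → a2 ≠ a4 → a3 ≠ a4 → op a1 a2 ≠ op a3 a4) ∧
  (∀ a1 ∈ R, ∀ a2 ∈ R, ∀ a3 ∈ R, a1 ≠ a2 → a1 ≠ a3 → a2 ≠ a3 → op a1 a2 ≠ op a1 a3)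

lemma SeparatesPairs.eq_or_eq_swap (hR : SeparatesPairs op R) (hcomm : ∀ a b, op a b = op b a)
    {p q : α × α} (hp : p ∈ R.offDiag) (hq : q ∈ R.offDiag) (h : op q.1 q.2 = op p.1 p.2) :
    q = p ∨ q = p.swap := by
  obtain ⟨h4, h3⟩ := hR
  obtain ⟨a, b⟩ := p
  obtain ⟨c, d⟩ := q
  obtain ⟨ha, hb, hab⟩ := mem_offDiag.mp hp
  obtain ⟨hc, hd, hcd⟩ := mem_offDiag.mp hq
  simp only [Prod.mk.injEq, Prod.swap_prod_mk] at h ⊢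
  by_contra! hne
  by_cases hca : c = a
  · subst hca; exact h3 c hc d hd b hb hcd hab (hne.1 rfl) h
  by_cases hcb : c = b
  · subst hcb; exact h3 c hc d hd a ha hcd (Ne.symm hab) (hne.2 rfl) (h.trans (hcomm a c))
  by_cases hda : d = a
  · subst hda; exact h3 d hd c hc b hb (Ne.symm hcd) hab hcb ((hcomm d c).trans h)
  by_cases hdb : d = b
  · subst hdb
    exact h3 d hd c hc a ha (Ne.symm hcd) (Ne.symm hab) hca
      ((hcomm d c).trans (h.trans (hcomm a d)))
  exact h4 c hc d hd a ha b hb hcd hca hcb hda hdb hab h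

lemma SeparatesPairs.card_filter_offDiag_le_two (hR : SeparatesPairs op R)
    (hcomm : ∀ a b, op a b = op b a) (s : α) : #{p ∈ R.offDiag | op p.1 p.2 = s} ≤ 2 := by
  rcases eq_empty_or_nonempty {p ∈ R.offDiag | op p.1 p.2 = s} with hempty | ⟨p, hp⟩
  · simp [hempty]
  rw [mem_filter] at hp
  refine (card_le_card fun q hq => ?_).trans (card_le_two (a := p) (b := p.swap))
  rw [mem_filter] at hq
  simpa using hR.eq_or_eq_swap hcomm hp.1 hq.1 (hq.2.trans hp.2.symm)

end SeparatesPairs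

lemma exists_card_filter_inter_add_card_filter_compl_union {ι : Type*} [Fintype ι]
    [DecidableEq ι] (R : Finset (Finset ι)) (i : ι) : ∃ m,
    #{p ∈ R.offDiag | i ∈ p.1 ∩ p.2} + #{p ∈ R.offDiag | i ∈ (p.1 ∪ p.2)ᶜ} + 2 * m =
        #R.offDiag ∧
      #{p ∈ R.offDiag | i ∈ p.1 ∩ p.2} * #{p ∈ R.offDiag | i ∈ (p.1 ∪ p.2)ᶜ} ≤ m * m := by
  set K := #{a ∈ R | i ∈ a}
  set L := #{a ∈ R | i ∉ a}
  have hKL : K + L = #R := card_filter_add_card_filter_not _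
  have hc : #{p ∈ R.offDiag | i ∈ p.1 ∩ p.2} + K = K * K := by
    rw [← offDiag_card_add_card, offDiag_filter]
    simp only [mem_inter]
    rfl
  have hd : #{p ∈ R.offDiag | i ∈ (p.1 ∪ p.2)ᶜ} + L = L * L := by
    rw [← offDiag_card_add_card, offDiag_filter]
    simp only [mem_compl, mem_union, not_or]
    rfl
  have hD : #R.offDiag + (K + L) = (K + L) * (K + L) := hKL ▸ offDiag_card_add_card R
  refine ⟨K * L, ?_, ?_⟩
  · have hsq : (K + L) * (K + L) = K * K + L * L + 2 * (K * L) := by ring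
    linarith
  · calc _ ≤ (K * K) * (L * L) := Nat.mul_le_mul (by omega) (by omega)
      _ = K * L * (K * L) := by ring

lemma pow_mul_pow_le_pow_mul_pow {a b x y u v : ℕ} (hab : a ≤ b) (hxy : x ≤ y)
    (h : x + u = y + v) : a ^ y * b ^ v ≤ a ^ x * b ^ u := by
  obtain ⟨t, rfl⟩ := Nat.exists_eq_add_of_le hxy
  obtain rfl : u = v + t := by omega
  rw [pow_add, pow_add, mul_assoc, mul_comm (b ^ v)]
  exact Nat.mul_le_mul_left _ (Nat.mul_le_mul_right _ (Nat.pow_le_pow_left hab t))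

/-- Since `a ≤ b`, the quantity `aᶜ bᵉ` (with `c + e = D`) is smallest at the largest admissible
`c`, namely `c = p D / P`, where `(aᶜ bᵉ)^P = (a^p b^q)^D`. -/
lemma two_pow_mul_le_pow_mul_pow {a b p q P T c e D : ℕ} (hab : a ≤ b) (hpq : p + q = P)
    (hT : 2 ^ T ≤ a ^ p * b ^ q) (hc : P * c ≤ p * D) (hce : c + e = D) :
    2 ^ (T * D) ≤ (a ^ c * b ^ e) ^ P := calc
  2 ^ (T * D) ≤ (a ^ p * b ^ q) ^ D := by rw [pow_mul]; exact Nat.pow_le_pow_left hT D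
  _ = a ^ (p * D) * b ^ (q * D) := by rw [mul_pow, pow_mul, pow_mul]
  _ ≤ a ^ (P * c) * b ^ (P * e) :=
    pow_mul_pow_le_pow_mul_pow hab hc (by rw [← mul_add, hce, ← add_mul, hpq])
  _ = (a ^ c * b ^ e) ^ P := by rw [mul_pow, ← pow_mul, ← pow_mul, mul_comm c, mul_comm e]

/-- `√c + √d ≤ √D`, in the form: `c / D ≥ (u / w)²` forces `d / D ≤ (v / w)²`. -/
lemma sq_mul_le_of_le_sq_mul {c d m D u v w : ℕ} (huv : u + v = w)
    (hsum : c + d + 2 * m = D) (hcd : c * d ≤ m * m) (hc : u ^ 2 * D ≤ w ^ 2 * c) :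
    w ^ 2 * d ≤ v ^ 2 * D := by
  by_contra! hd
  have hm : u * v * D ≤ w ^ 2 * m := by
    refine Nat.mul_self_le_mul_self_iff.mp ?_
    calc u * v * D * (u * v * D) = (u ^ 2 * D) * (v ^ 2 * D) := by ring
      _ ≤ (w ^ 2 * c) * (w ^ 2 * d) := Nat.mul_le_mul hc hd.le
      _ = w ^ 2 * w ^ 2 * (c * d) := by ring
      _ ≤ w ^ 2 * w ^ 2 * (m * m) := Nat.mul_le_mul_left _ hcd
      _ = w ^ 2 * m * (w ^ 2 * m) := by ring
  subst huv hsum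
  nlinarith

/-- The weights are `β = a / 2ᵏ` and `γ = a' / 2ʲ`, so that `β^c (1-β)^e = aᶜ bᵉ / 2^(kD)` and
`γ^d (1-γ)^f = a'^d b'^f / 2^(jD)`. -/
lemma exists_weights_of_dyadic {D c e d f k j a b a' b' T T' Q : ℕ}
    (hce : c + e = D) (hdf : d + f = D) (hab : a + b = 2 ^ k) (hab' : a' + b' = 2 ^ j)
    (hQ : 0 < Q) (hT : 4 * Q * (k + j) ≤ T + T' + 7 * Q)
    (hmeet : 2 ^ (T * D) ≤ (a ^ c * b ^ e) ^ (4 * Q))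
    (hjoin : 2 ^ (T' * D) ≤ (a' ^ d * b' ^ f) ^ (4 * Q)) :
    ∃ β ∈ Set.Icc (0 : ℝ) 1, ∃ γ ∈ Set.Icc (0 : ℝ) 1,
      1 ≤ 2 ^ (7 * D) * (β ^ c * (1 - β) ^ e * (γ ^ d * (1 - γ) ^ f)) ^ 4 := by
  set N := a ^ c * b ^ e * (a' ^ d * b' ^ f)
  have hnat : (2 ^ ((k + j) * D)) ^ (4 * Q) ≤ (2 ^ (7 * D)) ^ Q * N ^ (4 * Q) := calc
    (2 ^ ((k + j) * D)) ^ (4 * Q) ≤ 2 ^ (7 * D * Q + (T * D + T' * D)) := by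
      rw [← pow_mul]
      exact Nat.pow_le_pow_right two_pos (by nlinarith)
    _ ≤ (2 ^ (7 * D)) ^ Q * N ^ (4 * Q) := by
      rw [pow_add, pow_add, pow_mul, mul_pow]; gcongr
  have hk : (0 : ℝ) < 2 ^ k := by positivity
  have hj : (0 : ℝ) < 2 ^ j := by positivity
  have hab_real : (a : ℝ) + b = 2 ^ k := by exact_mod_cast hab
  have hab'_real : (a' : ℝ) + b' = 2 ^ j := by exact_mod_cast hab'
  refine ⟨a / 2 ^ k, ⟨by positivity, ?_⟩, a' / 2 ^ j, ⟨by positivity, ?_⟩, ?_⟩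
  · rw [div_le_one hk]; linarith [(b.cast_nonneg : (0 : ℝ) ≤ b)]
  · rw [div_le_one hj]; linarith [(b'.cast_nonneg : (0 : ℝ) ≤ b')]
  have hb : 1 - (a : ℝ) / 2 ^ k = b / 2 ^ k := by field_simp; linarith
  have hb' : 1 - (a' : ℝ) / 2 ^ j = b' / 2 ^ j := by field_simp; linarith
  have hdenom : ((2 ^ ((k + j) * D) : ℕ) : ℝ) =
      (2 ^ k) ^ c * (2 ^ k) ^ e * ((2 ^ j) ^ d * (2 ^ j) ^ f) := by
    rw [← pow_add, ← pow_add, hce, hdf, ← mul_pow, ← pow_add, ← pow_mul]; push_cast; rfl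
  have hX : (a / 2 ^ k : ℝ) ^ c * (b / 2 ^ k) ^ e * ((a' / 2 ^ j) ^ d * (b' / 2 ^ j) ^ f) =
      (N : ℝ) / (2 ^ ((k + j) * D) : ℕ) := by
    rw [hdenom]; push_cast [N]; ring
  rw [hb, hb', hX]
  refine (one_le_pow_iff_of_nonneg (by positivity) hQ.ne').mp ?_
  rw [show ((2 : ℝ) ^ (7 * D) * ((N : ℝ) / (2 ^ ((k + j) * D) : ℕ)) ^ 4) ^ Q =
      ((2 ^ (7 * D)) ^ Q * N ^ (4 * Q)) / ((2 ^ ((k + j) * D) : ℕ) : ℝ) ^ (4 * Q) by ring,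
    one_le_div (by positivity)]
  exact_mod_cast hnat

/-- Three regimes of `x = c / D`, with `(β, γ)` equal to `(9/64, 1/2)` for `x ≤ 9/64`,
`(49/256, 25/64)` for `x ≤ 49/256`, and `(1/4, 81/256)` otherwise; in the last two `√x + √y ≤ 1`
bounds `y = d / D` by `25/64` and `81/256`, and `x ≤ y` bounds `x` by `1/4`. -/
lemma exists_weights_of_le {D c e d f m : ℕ} (hce : c + e = D) (hdf : d + f = D)
    (hsum : c + d + 2 * m = D) (hcd : c * d ≤ m * m) (hle : c ≤ d) :
    ∃ β ∈ Set.Icc (0 : ℝ) 1, ∃ γ ∈ Set.Icc (0 : ℝ) 1,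
      1 ≤ 2 ^ (7 * D) * (β ^ c * (1 - β) ^ e * (γ ^ d * (1 - γ) ^ f)) ^ 4 := by
  rcases le_or_gt (64 * c) (9 * D) with hc | hc
  · exact exists_weights_of_dyadic (a := 9) (b := 55) (k := 6) (a' := 1) (b' := 1) (j := 1)
      (T := 1344) (T' := 0) (Q := 64) hce hdf rfl rfl (by norm_num) (by norm_num)
      (two_pow_mul_le_pow_mul_pow (p := 36) (q := 220) (by norm_num) rfl (by decide +kernel)
        (by omega) hce) (by simp)
  rcases le_or_gt (256 * c) (49 * D) with hc' | hc'
  · have hd := sq_mul_le_of_le_sq_mul (u := 3) (v := 5) (w := 8) rfl hsum hcd (by omega)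
    exact exists_weights_of_dyadic (a := 49) (b := 207) (k := 8) (a' := 25) (b' := 39) (j := 6)
      (T := 1848) (T' := 1288) (Q := 64) hce hdf rfl rfl (by norm_num) (by norm_num)
      (two_pow_mul_le_pow_mul_pow (p := 49) (q := 207) (by norm_num) rfl (by decide +kernel)
        (by omega) hce)
      (two_pow_mul_le_pow_mul_pow (p := 100) (q := 156) (by norm_num) rfl (by decide +kernel)
        (by omega) hdf)
  · have hd := sq_mul_le_of_le_sq_mul (u := 7) (v := 9) (w := 16) rfl hsum hcd (by omega)
    have hcm : c ≤ m := Nat.mul_self_le_mul_self_iff.mp ((Nat.mul_le_mul_left c hle).trans hcd)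
    exact exists_weights_of_dyadic (a := 1) (b := 3) (k := 2) (a' := 81) (b' := 175) (j := 8)
      (T := 304) (T' := 1808) (Q := 64) hce hdf rfl rfl (by norm_num) (by norm_num)
      (two_pow_mul_le_pow_mul_pow (p := 64) (q := 192) (by norm_num) rfl (by decide +kernel)
        (by omega) hce)
      (two_pow_mul_le_pow_mul_pow (p := 81) (q := 175) (by norm_num) rfl (by decide +kernel)
        (by omega) hdf)

lemma exists_weights {D c e d f m : ℕ} (hce : c + e = D) (hdf : d + f = D)
    (hsum : c + d + 2 * m = D) (hcd : c * d ≤ m * m) :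
    ∃ β ∈ Set.Icc (0 : ℝ) 1, ∃ γ ∈ Set.Icc (0 : ℝ) 1,
      1 ≤ 2 ^ (7 * D) * (β ^ c * (1 - β) ^ e * (γ ^ d * (1 - γ) ^ f)) ^ 4 := by
  rcases le_total c d with hle | hle
  · exact exists_weights_of_le hce hdf hsum hcd hle
  · obtain ⟨γ, hγ, β, hβ, h⟩ :=
      exists_weights_of_le (m := m) hdf hce (by rw [← hsum]; ring) (by rwa [mul_comm]) hle
    exact ⟨β, hβ, γ, hγ, by rwa [mul_comm (β ^ c * (1 - β) ^ e)]⟩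

lemma pow_eight_le_of_prod_le {ι : Type*} [Fintype ι] {D : ℕ} (hD : 0 < D) {x y : ι → ℝ}
    (hx0 : ∀ i, 0 ≤ x i) (hy0 : ∀ i, 0 ≤ y i)
    (hx : ∏ i, x i ≤ (2 / D) ^ D) (hy : ∏ i, y i ≤ (2 / D) ^ D)
    (hxy : ∀ i, 1 ≤ 2 ^ (7 * D) * (x i * y i) ^ 4) :
    D ^ 8 ≤ 2 ^ (7 * Fintype.card ι + 8) := by
  have key : (1 : ℝ) ≤ 2 ^ (7 * D * Fintype.card ι) * (2 / D) ^ (8 * D) := calc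
    (1 : ℝ) ≤ ∏ i, 2 ^ (7 * D) * (x i * y i) ^ 4 := one_le_prod fun i _ => hxy i
    _ = 2 ^ (7 * D * Fintype.card ι) * ((∏ i, x i) * ∏ i, y i) ^ 4 := by
      rw [prod_mul_distrib, prod_const, card_univ, ← pow_mul, prod_pow, prod_mul_distrib]
    _ ≤ 2 ^ (7 * D * Fintype.card ι) * ((2 / D) ^ D * (2 / D) ^ D) ^ 4 := by
      have := prod_nonneg fun i (_ : i ∈ univ) => hy0 i
      have := prod_nonneg fun i (_ : i ∈ univ) => hx0 i
      gcongr
    _ = 2 ^ (7 * D * Fintype.card ι) * (2 / D) ^ (8 * D) := by ring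
  have hD' : (0 : ℝ) < D := by exact_mod_cast hD
  rw [div_pow, mul_div_assoc', le_div_iff₀ (by positivity), one_mul, ← pow_add] at key
  refine (Nat.pow_le_pow_iff_left hD.ne').mp ?_
  exact_mod_cast (calc ((D : ℝ) ^ 8) ^ D = D ^ (8 * D) := by rw [← pow_mul]
    _ ≤ 2 ^ (7 * D * Fintype.card ι + 8 * D) := key
    _ = (2 ^ (7 * Fintype.card ι + 8)) ^ D := by rw [← pow_mul]; ring_nf)

namespace IsRecovering

variable {n : ℕ} {R : Finset (Finset (Fin n))}

lemma separatesPairs_inter (hR : IsRecovering R) : SeparatesPairs (· ∩ ·) R :=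
  ⟨fun a1 ha1 a2 ha2 a3 ha3 a4 ha4 h12 h13 h14 h23 h24 h34 =>
      (hR.1 a1 ha1 a2 ha2 a3 ha3 a4 ha4 h12 h13 h14 h23 h24 h34).1,
    fun a1 ha1 a2 ha2 a3 ha3 h12 h13 h23 => (hR.2 a1 ha1 a2 ha2 a3 ha3 h12 h13 h23).1⟩

lemma separatesPairs_compl_union (hR : IsRecovering R) : SeparatesPairs (fun a b => (a ∪ b)ᶜ) R :=
  ⟨fun a1 ha1 a2 ha2 a3 ha3 a4 ha4 h12 h13 h14 h23 h24 h34 =>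
      compl_injective.ne (hR.1 a1 ha1 a2 ha2 a3 ha3 a4 ha4 h12 h13 h14 h23 h24 h34).2,
    fun a1 ha1 a2 ha2 a3 ha3 h12 h13 h23 =>
      compl_injective.ne (hR.2 a1 ha1 a2 ha2 a3 ha3 h12 h13 h23).2⟩

theorem card_offDiag_pow_le (hR : IsRecovering R) : #R.offDiag ^ 8 ≤ 2 ^ (7 * n + 8) := by
  rcases Nat.eq_zero_or_pos #R.offDiag with hD | hD
  · simp [hD]
  choose β hβ γ hγ hweights using fun i : Fin n =>
    have ⟨m, hsum, hcd⟩ := exists_card_filter_inter_add_card_filter_compl_union R i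
    exists_weights (card_filter_add_card_filter_not _) (card_filter_add_card_filter_not _) hsum hcd
  have hmeet := prod_pow_mul_pow_le_of_card_fiber_le R.offDiag _
    (hR.separatesPairs_inter.card_filter_offDiag_le_two inter_comm) hβ
  have hjoin := prod_pow_mul_pow_le_of_card_fiber_le R.offDiag _
    (hR.separatesPairs_compl_union.card_filter_offDiag_le_two fun a b => by rw [union_comm]) hγ
  push_cast at hmeet hjoin
  simpa using pow_eight_le_of_prod_le hD
    (fun i => mul_nonneg (pow_nonneg (hβ i).1 _) (pow_nonneg (sub_nonneg.2 (hβ i).2) _))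
    (fun i => mul_nonneg (pow_nonneg (hγ i).1 _) (pow_nonneg (sub_nonneg.2 (hγ i).2) _))
    hmeet hjoin hweights

theorem card_pow_le (hR : IsRecovering R) : #R ^ 16 ≤ 3 ^ 8 * 2 ^ (7 * n) := by
  rcases lt_or_ge #R 3 with hsmall | hlarge
  · rcases Nat.eq_zero_or_pos n with rfl | hn
    · have : #R ≤ 1 := by simpa using card_le_univ R
      calc #R ^ 16 ≤ 1 := pow_le_one' this 16
        _ ≤ 3 ^ 8 * 2 ^ (7 * 0) := by norm_num
    · calc #R ^ 16 ≤ 2 ^ 16 := Nat.pow_le_pow_left (by omega) 16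
        _ ≤ 3 ^ 8 * 2 ^ 7 := by norm_num
        _ ≤ 3 ^ 8 * 2 ^ (7 * n) := by gcongr <;> omega
  · have hsq : 2 * (#R * #R) ≤ 3 * #R.offDiag := by
      have := offDiag_card_add_card R
      nlinarith
    refine Nat.le_of_mul_le_mul_left ?_ (by norm_num : 0 < 2 ^ 8)
    calc 2 ^ 8 * #R ^ 16 = (2 * (#R * #R)) ^ 8 := by ring
      _ ≤ (3 * #R.offDiag) ^ 8 := Nat.pow_le_pow_left hsq 8
      _ = 3 ^ 8 * #R.offDiag ^ 8 := by ring
      _ ≤ 3 ^ 8 * 2 ^ (7 * n + 8) := Nat.mul_le_mul_left _ hR.card_offDiag_pow_le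
      _ = 2 ^ 8 * (3 ^ 8 * 2 ^ (7 * n)) := by ring

end IsRecovering

theorem recovering_set_card_bound {n : ℕ} (R : Finset (Finset (Fin n)))
    (hR : IsRecovering R) :
    (R.card : ℝ) ≤ Real.sqrt 3 * 2 ^ ((0.4392 : ℝ) * n) := by
  have hsqrt : Real.sqrt 3 ^ 16 = 3 ^ 8 := by
    rw [show 16 = 2 * 8 by rfl, pow_mul, Real.sq_sqrt (by norm_num)]
  refine le_of_pow_le_pow_left₀ (n := 16) (by norm_num) (by positivity) ?_
  calc (R.card : ℝ) ^ 16 ≤ 3 ^ 8 * 2 ^ (7 * n) := by exact_mod_cast hR.card_pow_le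
    _ = Real.sqrt 3 ^ 16 * 2 ^ ((7 : ℝ) * n) := by
      rw [hsqrt, ← Real.rpow_natCast (2 : ℝ) (7 * n), Nat.cast_mul, Nat.cast_ofNat]
    _ ≤ Real.sqrt 3 ^ 16 * 2 ^ ((0.4392 : ℝ) * n * (16 : ℕ)) := by
      refine mul_le_mul_of_nonneg_left (Real.rpow_le_rpow_of_exponent_le (by norm_num) ?_)
        (by positivity)
      nlinarith [(n.cast_nonneg : (0 : ℝ) ≤ n)]
    _ = (Real.sqrt 3 * 2 ^ ((0.4392 : ℝ) * n)) ^ 16 := by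
      rw [mul_pow, Real.rpow_mul_natCast (by norm_num)]
end

section
/- If R is a recovering set in the Boolean lattice B_n and the random variable ξ = a ∩ b where a, b are chosen independently and uniformly from R, then the binary entropy H(ξ) ≥ log₂(|R|²/3). -/
/-- The probability that the intersection of two independent uniform elements of `R`
equals `a`. -/
noncomputable def interProb {n : ℕ} (R : Finset (Finset (Fin n))) (a : Finset (Fin n)) : ℝ :=
  (((R ×ˢ R).filter (fun p => p.1 ∩ p.2 = a)).card : ℝ) / (R.card : ℝ) ^ 2

/-!
A recovering set determines an unordered pair of distinct elements from their intersection,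
so every value `c` of `ξ = a ∩ b` is taken by at most three ordered pairs: `(x, y)`, `(y, x)`
and `(c, c)`. Hence every value has probability at most `3 / |R|²`, and the entropy of a
distribution is at least `log (1 / max probability)`.
-/

open Finset Real

theorem logb_inv_le_sum_mul_logb_inv {ι : Type*} {b q : ℝ} (hb : 1 < b) (s : Finset ι)
    (p : ι → ℝ) (hp : ∀ i ∈ s, 0 < p i) (hpq : ∀ i ∈ s, p i ≤ q) (hsum : ∑ i ∈ s, p i = 1) :
    logb b (1 / q) ≤ ∑ i ∈ s, p i * logb b (1 / p i) :=
  calc logb b (1 / q) = ∑ i ∈ s, p i * logb b (1 / q) := by rw [← sum_mul, hsum, one_mul]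
    _ ≤ ∑ i ∈ s, p i * logb b (1 / p i) := by
      refine sum_le_sum fun i hi => mul_le_mul_of_nonneg_left ?_ (hp i hi).le
      exact logb_le_logb_of_le hb (one_div_pos.mpr ((hp i hi).trans_le (hpq i hi)))
        (one_div_le_one_div_of_le (hp i hi) (hpq i hi))

namespace IsRecovering

variable {n : ℕ} {R : Finset (Finset (Fin n))}

theorem eq_or_eq_swap_of_inter_eq (hR : IsRecovering R) {x y u v : Finset (Fin n)}
    (hx : x ∈ R) (hy : y ∈ R) (hu : u ∈ R) (hv : v ∈ R) (hxy : x ≠ y) (huv : u ≠ v)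
    (h : x ∩ y = u ∩ v) : (x = u ∧ y = v) ∨ (x = v ∧ y = u) := by
  by_contra hne
  rcases eq_or_ne x u with rfl | hxu
  · exact (hR.2 x hx y hy v hv hxy huv (by tauto)).1 h
  rcases eq_or_ne x v with rfl | hxv
  · exact (hR.2 x hx y hy u hu hxy huv.symm (by tauto)).1 (by rw [h, inter_comm])
  rcases eq_or_ne y u with rfl | hyu
  · exact (hR.2 y hy x hx v hv hxy.symm huv (by tauto)).1 (by rw [inter_comm, h])
  rcases eq_or_ne y v with rfl | hyv
  · exact (hR.2 y hy x hx u hu hxy.symm huv.symm hxu).1 (by rw [inter_comm, h, inter_comm])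
  exact (hR.1 x hx y hy u hu v hv hxy hxu hxv hyu hyv huv).1 h

theorem card_filter_inter_eq_le_three (hR : IsRecovering R) (a : Finset (Fin n)) :
    #{p ∈ R ×ˢ R | p.1 ∩ p.2 = a} ≤ 3 := by
  set F := {p ∈ R ×ˢ R | p.1 ∩ p.2 = a}
  by_cases hoff : ∃ p ∈ F, p.1 ≠ p.2
  · obtain ⟨⟨u, v⟩, huvF, huv⟩ := hoff
    obtain ⟨⟨hu, hv⟩, huva⟩ := by simpa [F] using huvF
    refine (card_le_card fun ⟨x, y⟩ hxyF => ?_).trans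
      (card_le_three (a := (a, a)) (b := (u, v)) (c := (v, u)))
    obtain ⟨⟨hx, hy⟩, hxya⟩ := by simpa [F] using hxyF
    simp only [mem_insert, mem_singleton, Prod.mk.injEq]
    rcases eq_or_ne x y with rfl | hxy
    · rw [inter_self] at hxya
      exact .inl ⟨hxya, hxya⟩
    · exact .inr (hR.eq_or_eq_swap_of_inter_eq hx hy hu hv hxy huv (hxya.trans huva.symm))
  · push Not at hoff
    refine (card_le_card fun ⟨x, y⟩ hxyF => ?_).trans (card_singleton (a, a)).le |>.trans
      (by norm_num)
    obtain rfl : x = y := hoff _ hxyF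
    obtain ⟨_, rfl⟩ := by simpa [F] using hxyF
    simp

theorem interProb_le (hR : IsRecovering R) (a : Finset (Fin n)) :
    interProb R a ≤ 3 / (R.card : ℝ) ^ 2 := by
  unfold interProb
  gcongr
  exact_mod_cast hR.card_filter_inter_eq_le_three a

end IsRecovering

section interProb

variable {n : ℕ} {R : Finset (Finset (Fin n))}

theorem interProb_pos {a : Finset (Fin n)} (ha : a ∈ (R ×ˢ R).image (fun p => p.1 ∩ p.2)) :
    0 < interProb R a := by
  obtain ⟨p, hp, rfl⟩ := mem_image.mp ha
  have hRne : R.Nonempty := ⟨p.1, (mem_product.mp hp).1⟩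
  have hfiber : ({q ∈ R ×ˢ R | q.1 ∩ q.2 = p.1 ∩ p.2}).Nonempty := ⟨p, mem_filter.mpr ⟨hp, rfl⟩⟩
  exact div_pos (by exact_mod_cast hfiber.card_pos) (by positivity)

theorem sum_interProb_eq_one (hne : R.Nonempty) :
    ∑ a ∈ (R ×ˢ R).image (fun p => p.1 ∩ p.2), interProb R a = 1 := by
  have hcard := card_eq_sum_card_fiberwise (f := fun p : Finset (Fin n) × Finset (Fin n) =>
    p.1 ∩ p.2) (s := R ×ˢ R) (t := (R ×ˢ R).image _) fun p hp => mem_image_of_mem _ hp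
  have hN : (R.card : ℝ) ≠ 0 := by exact_mod_cast hne.card_pos.ne'
  unfold interProb
  rw [← sum_div, div_eq_one_iff_eq (pow_ne_zero 2 hN), ← Nat.cast_sum, ← hcard, card_product]
  push_cast
  ring

end interProb

theorem entropy_inter_ge {n : ℕ} (R : Finset (Finset (Fin n)))
    (hR : IsRecovering R) (hne : R.Nonempty) :
    Real.logb 2 ((R.card : ℝ) ^ 2 / 3) ≤
      ∑ a ∈ (R ×ˢ R).image (fun p => p.1 ∩ p.2),
        interProb R a * Real.logb 2 (1 / interProb R a) := by
  rw [← one_div_div]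
  exact logb_inv_le_sum_mul_logb_inv one_lt_two _ _ (fun _ => interProb_pos)
    (fun a _ => hR.interProb_le a) (sum_interProb_eq_one hne)
end

section
/- For the binary entropy function h(x) = x log₂(1/x) + (1−x) log₂(1/(1−x)) (with h(0)=h(1)=0), the maximum over x ∈ [0,1] of h(x²) + h((1−x)²) is at most 1.7568, i.e., for all x ∈ [0,1], h(x²) + h((1−x)²) ≤ 1.7568. -/
/-!
In nats, `log 2 - binEntropy p` is the divergence of `Bernoulli p` from `Bernoulli (1/2)`, and
Pinsker's inequality bounds it below by `2 (p - 1/2)²`. The squared distances of `x²` and `(1 - x)²`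
to `1/2` add up to `2 t⁴ + t² + 1/8 ≥ 1/8`, where `t = x - 1/2`. Hence
`h(x²) + h((1 - x)²) ≤ 2 - 1 / (4 log 2) < 1.7568`.
-/

/-- The binary entropy function (with `h 0 = h 1 = 0`, since `Real.logb 2 0 = 0`). -/
noncomputable def binEnt (x : ℝ) : ℝ :=
  -(x * Real.logb 2 x) - (1 - x) * Real.logb 2 (1 - x)

open Real Set

theorem Real.two_mul_le_log_one_add_sub_log_one_sub {u : ℝ} (hu₀ : 0 ≤ u) (hu₁ : u < 1) :
    2 * u ≤ log (1 + u) - log (1 - u) := by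
  have hsum := hasSum_log_sub_log_of_abs_lt_one (abs_lt.2 ⟨by linarith, hu₁⟩)
  simpa using le_hasSum hsum 0 fun k _ ↦ by positivity

theorem Real.monotoneOn_binEntropy_add_two_mul_sq :
    MonotoneOn (fun p ↦ binEntropy p + 2 * (p - 2⁻¹) ^ 2) (Icc 0 2⁻¹) := by
  refine monotoneOn_of_hasDerivWithinAt_nonneg (f' := fun p ↦ log (1 - p) - log p + 4 * (p - 2⁻¹))
    (convex_Icc 0 2⁻¹) (by fun_prop) (fun p hp ↦ ?_) (fun p hp ↦ ?_)
  all_goals rw [interior_Icc] at hp; obtain ⟨hp₀, hp₁⟩ := hp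
  · have hsq := ((hasDerivAt_id p).sub_const 2⁻¹).pow 2 |>.const_mul 2
    refine ((hasDerivAt_binEntropy hp₀.ne' (by linarith)).add hsq).hasDerivWithinAt.congr_deriv ?_
    simp only [id_eq, Nat.cast_ofNat]
    ring
  · -- `log (1 - p) - log p = log (1 + u) - log (1 - u)` with `u = 1 - 2p`
    have hlog := two_mul_le_log_one_add_sub_log_one_sub (u := 1 - 2 * p) (by linarith) (by linarith)
    rw [show 1 + (1 - 2 * p) = 2 * (1 - p) by ring, show 1 - (1 - 2 * p) = 2 * p by ring,
      log_mul two_ne_zero (by linarith), log_mul two_ne_zero hp₀.ne'] at hlog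
    linarith

theorem Real.binEntropy_le_log_two_sub_two_mul_sq {p : ℝ} (hp : p ∈ Icc 0 1) :
    binEntropy p ≤ log 2 - 2 * (p - 2⁻¹) ^ 2 := by
  have half_mem : (2⁻¹ : ℝ) ∈ Icc 0 2⁻¹ := by norm_num
  rcases le_total p 2⁻¹ with hle | hle
  · have := monotoneOn_binEntropy_add_two_mul_sq ⟨hp.1, hle⟩ half_mem hle
    simp only [binEntropy_two_inv, sub_self] at this
    linarith
  · have := monotoneOn_binEntropy_add_two_mul_sq ⟨by linarith [hp.2], by linarith⟩ half_mem
      (by linarith : 1 - p ≤ 2⁻¹)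
    simp only [binEntropy_one_sub, binEntropy_two_inv, sub_self] at this
    nlinarith

theorem binEnt_eq_binEntropy_div_log_two (p : ℝ) : binEnt p = binEntropy p / log 2 := by
  simp only [binEnt, binEntropy, logb, log_inv]
  ring

theorem binEnt_le_one_sub_sq_div_log_two {p : ℝ} (hp : p ∈ Icc 0 1) :
    binEnt p ≤ 1 - 2 * (p - 2⁻¹) ^ 2 / log 2 := by
  rw [binEnt_eq_binEntropy_div_log_two, one_sub_div (log_pos one_lt_two).ne']
  gcongr
  exact binEntropy_le_log_two_sub_two_mul_sq hp

theorem binEnt_sq_add_le (x : ℝ) (hx : x ∈ Set.Icc (0 : ℝ) 1) :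
    binEnt (x ^ 2) + binEnt ((1 - x) ^ 2) ≤ 1.7568 := by
  obtain ⟨hx₀, hx₁⟩ := hx
  have h₁ := binEnt_le_one_sub_sq_div_log_two (p := x ^ 2) ⟨by positivity, by nlinarith⟩
  have h₂ := binEnt_le_one_sub_sq_div_log_two (p := (1 - x) ^ 2) ⟨by positivity, by nlinarith⟩
  have hdist : 1 / 8 ≤ (x ^ 2 - 2⁻¹) ^ 2 + ((1 - x) ^ 2 - 2⁻¹) ^ 2 := by
    nlinarith [sq_nonneg (x - 2⁻¹), sq_nonneg ((x - 2⁻¹) ^ 2)]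
  have hlog₀ : 0 < log 2 := log_pos one_lt_two
  have hgap : 0.2432 ≤ 2 * (1 / 8) / log 2 := by
    rw [le_div_iff₀ hlog₀]
    linarith [log_two_lt_d9]
  have hsum : 2 * (1 / 8) / log 2 ≤
      2 * (x ^ 2 - 2⁻¹) ^ 2 / log 2 + 2 * ((1 - x) ^ 2 - 2⁻¹) ^ 2 / log 2 := by
    rw [← add_div]
    gcongr
    linarith
  linarith
end

section
/- For any x ∈ [0,1] with x ≥ 6/11 or x ≤ 5/11, h(x²) + h((1−x)²) ≤ 1 + h(25/121), where h is the binary entropy function (base 2). -/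
lemma binEnt_eq_binEntropy_div_log_two_s4 (x : ℝ) : binEnt x = Real.binEntropy x / Real.log 2 := by
  simp only [binEnt, Real.binEntropy, Real.logb, Real.log_inv]
  ring

lemma binEnt_le_one (x : ℝ) : binEnt x ≤ 1 := by
  rw [binEnt_eq_binEntropy_div_log_two_s4, div_le_one (Real.log_pos one_lt_two)]
  exact Real.binEntropy_le_log_two

lemma binEnt_monotoneOn : MonotoneOn binEnt (Set.Icc 0 2⁻¹) := by
  intro a ha b hb hab
  simp only [binEnt_eq_binEntropy_div_log_two_s4]
  gcongr
  exact Real.binEntropy_strictMonoOn.monotoneOn ha hb hab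

lemma binEnt_add_le_one_add_of_le {x a : ℝ} (y : ℝ) (hx : 0 ≤ x) (hxa : x ≤ a) (ha : a ≤ 2⁻¹) :
    binEnt x + binEnt y ≤ 1 + binEnt a := by
  have hxa' : binEnt x ≤ binEnt a :=
    binEnt_monotoneOn ⟨hx, hxa.trans ha⟩ ⟨hx.trans hxa, ha⟩ hxa
  linarith [binEnt_le_one y]

theorem binEnt_sq_add_le_of_far (x : ℝ) (hx : x ∈ Set.Icc (0 : ℝ) 1)
    (h : 6 / 11 ≤ x ∨ x ≤ 5 / 11) :
    binEnt (x ^ 2) + binEnt ((1 - x) ^ 2) ≤ 1 + binEnt (25 / 121) := by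
  obtain ⟨hx0, hx1⟩ := hx
  rcases h with hfar | hfar
  · rw [add_comm]
    exact binEnt_add_le_one_add_of_le _ (by positivity) (by nlinarith) (by norm_num)
  · exact binEnt_add_le_one_add_of_le _ (by positivity) (by nlinarith) (by norm_num)
end

section
/- There exists a strongly cancellative set of size 2^{⌊n/2⌋} in the Boolean lattice B_n. Concretely, the family of all subsets s ⊆ {1,…,2⌊n/2⌋} that contain exactly one element from each block S_i = {2i−1, 2i} for 1 ≤ i ≤ ⌊n/2⌋ is a strongly cancellative set of size 2^{⌊n/2⌋}. -/
/-
Encode a choice of one element from each block {2i+1, 2i+2} by a Boolean vector f, and call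
`transversal f` the chosen set. Two distinct vectors g ≠ h differ in some block i, and any third
vector f agrees at i with one of them, say with g. Then the element x picked by g in block i lies in
f ∩ g but not in h, and the element y picked by h lies in h but in neither f nor g; so x separates
the meets f ∩ g, f ∩ h and y separates the joins f ∪ g, f ∪ h.
-/

open Finset

/-- `C` is a strongly cancellative family of finite sets. -/
def IsStronglyCancellative (C : Finset (Finset ℕ)) : Prop :=
  ∀ a1 ∈ C, ∀ a2 ∈ C, ∀ a3 ∈ C, a1 ≠ a2 → a1 ≠ a3 → a2 ≠ a3 →
    a1 ∩ a2 ≠ a1 ∩ a3 ∧ a1 ∪ a2 ≠ a1 ∪ a3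

theorem inter_ne_inter_and_union_ne_union_of_separating {α : Type*} [DecidableEq α]
    {a b c : Finset α} {x y : α} (hxa : x ∈ a) (hxb : x ∈ b) (hxc : x ∉ c)
    (hya : y ∉ a) (hyb : y ∉ b) (hyc : y ∈ c) :
    a ∩ b ≠ a ∩ c ∧ a ∪ b ≠ a ∪ c := by
  refine ⟨fun h => ?_, fun h => ?_⟩
  · have hx : x ∈ a ∩ c := h ▸ mem_inter.2 ⟨hxa, hxb⟩
    exact hxc (mem_inter.1 hx).2
  · have hy : y ∈ a ∪ b := h ▸ mem_union_right a hyc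
    exact (mem_union.1 hy).elim hya hyb

def blockElem (i : ℕ) (b : Bool) : ℕ := 2 * i + 1 + if b then 1 else 0

theorem blockElem_inj {i j : ℕ} {b c : Bool} :
    blockElem i b = blockElem j c ↔ i = j ∧ b = c := by
  cases b <;> cases c <;> simp only [blockElem] <;> simp <;> omega

theorem blockElem_mem_Icc {m i : ℕ} (hi : i < m) (b : Bool) : blockElem i b ∈ Icc 1 (2 * m) := by
  cases b <;> simp only [blockElem, mem_Icc] <;> simp <;> omega

def transversal {m : ℕ} (f : Fin m → Bool) : Finset ℕ :=
  univ.image fun i : Fin m => blockElem i (f i)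

theorem blockElem_mem_transversal_iff {m : ℕ} (f : Fin m → Bool) (i : Fin m) (b : Bool) :
    blockElem i b ∈ transversal f ↔ f i = b := by
  simp only [transversal, mem_image, mem_univ, true_and, blockElem_inj, Fin.val_inj]
  exact ⟨fun ⟨j, hj, hfj⟩ => hj ▸ hfj, fun h => ⟨i, rfl, h⟩⟩

theorem transversal_injective (m : ℕ) : Function.Injective (transversal (m := m)) := by
  intro f g hfg
  funext i
  rw [← blockElem_mem_transversal_iff, hfg, blockElem_mem_transversal_iff]

theorem transversal_subset_Icc {m : ℕ} (f : Fin m → Bool) : transversal f ⊆ Icc 1 (2 * m) := by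
  intro x hx
  obtain ⟨i, -, rfl⟩ := mem_image.1 hx
  exact blockElem_mem_Icc i.isLt (f i)

theorem transversal_inter_ne_and_union_ne {m : ℕ} {f g h : Fin m → Bool} {i : Fin m}
    (hfg : f i = g i) (hgh : g i ≠ h i) :
    transversal f ∩ transversal g ≠ transversal f ∩ transversal h ∧
      transversal f ∪ transversal g ≠ transversal f ∪ transversal h := by
  refine inter_ne_inter_and_union_ne_union_of_separating (x := blockElem i (g i))
    (y := blockElem i (h i)) ?_ ?_ ?_ ?_ ?_ ?_ <;>
    simp only [blockElem_mem_transversal_iff] <;> grind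

theorem isStronglyCancellative_image_transversal (m : ℕ) :
    IsStronglyCancellative ((univ : Finset (Fin m → Bool)).image transversal) := by
  simp only [IsStronglyCancellative, mem_image, mem_univ, true_and]
  rintro _ ⟨f, rfl⟩ _ ⟨g, rfl⟩ _ ⟨h, rfl⟩ - - hgh
  obtain ⟨i, hi⟩ : ∃ i, g i ≠ h i := Function.ne_iff.1 fun e => hgh (congrArg _ e)
  by_cases hfg : f i = g i
  · exact transversal_inter_ne_and_union_ne hfg hi
  · have hfh : f i = h i := by revert hfg hi; cases f i <;> cases g i <;> cases h i <;> decide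
    obtain ⟨hinter, hunion⟩ := transversal_inter_ne_and_union_ne hfh (Ne.symm hi)
    exact ⟨hinter.symm, hunion.symm⟩

theorem exists_strongly_cancellative_Bn (n : ℕ) :
    let m := n / 2
    -- the family of subsets containing exactly one element of each block {2i-1, 2i}
    let C : Finset (Finset ℕ) :=
      (univ : Finset (Fin m → Bool)).image
        (fun f => univ.image (fun i : Fin m => 2 * (i : ℕ) + 1 + (if f i then 1 else 0)))
    (∀ s ∈ C, s ⊆ Finset.Icc 1 n) ∧ IsStronglyCancellative C ∧ C.card = 2 ^ m := by
  intro m C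
  change (∀ s ∈ univ.image transversal, s ⊆ Icc 1 n) ∧
    IsStronglyCancellative (univ.image transversal) ∧ (univ.image (transversal (m := m))).card = 2 ^ m
  refine ⟨?_, isStronglyCancellative_image_transversal m, ?_⟩
  · rintro _ hs
    obtain ⟨f, -, rfl⟩ := mem_image.1 hs
    exact (transversal_subset_Icc f).trans (Icc_subset_Icc_right (by omega))
  · rw [card_image_of_injective _ (transversal_injective m), card_univ, Fintype.card_fun,
      Fintype.card_bool, Fintype.card_fin]
end

section
/- If real numbers N ≥ 1, k ≥ 1, l ≥ 2 satisfy N ≤ 2^{k/2} · l^{(k/2)(1 + 1/N)}, then N ≤ (2l)^{k/2} + k(l−1)/2. -/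
/-!
The gap `N - 2^{k/2} l^{(k/2)(1 + 1/N)}` is strictly increasing in `N > 0`, since the exponent
`(k/2)(1 + 1/N)` decreases. At `N₁ = (2l)^{k/2} + k(l-1)/2` it is nonnegative: splitting
`2^{k/2} l^{(k/2)(1 + 1/N₁)} = (2l)^{k/2} l^{k/(2N₁)}` and applying Bernoulli's inequality
`l^p ≤ 1 + p(l-1)` for `0 ≤ p ≤ 1` bounds it by `(2l)^{k/2} + k(l-1)/2 · (2l)^{k/2}/N₁ ≤ N₁`.
Hence any `N` with nonpositive gap satisfies `N ≤ N₁`.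
-/

open Real Set

noncomputable def boundGap (k l N : ℝ) : ℝ :=
  N - 2 ^ (k / 2) * l ^ ((k / 2) * (1 + 1 / N))

section

variable {k l : ℝ}

theorem boundGap_strictMonoOn (hk : 0 ≤ k) (hl : 1 ≤ l) : StrictMonoOn (boundGap k l) (Ioi 0) := by
  intro a ha b _ hab
  have hexp : l ^ ((k / 2) * (1 + 1 / b)) ≤ l ^ ((k / 2) * (1 + 1 / a)) := by
    apply rpow_le_rpow_of_exponent_le hl
    gcongr
  unfold boundGap
  linarith [mul_le_mul_of_nonneg_left hexp (by positivity : (0 : ℝ) ≤ 2 ^ (k / 2))]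

theorem rpow_le_one_add_mul_sub_one (hl : 1 ≤ l) {p : ℝ} (hp0 : 0 ≤ p) (hp1 : p ≤ 1) :
    l ^ p ≤ 1 + p * (l - 1) := by
  simpa using rpow_one_add_le_one_add_mul_self (s := l - 1) (by linarith) hp0 hp1

theorem two_rpow_mul_rpow_le {M : ℝ} (hk : 0 ≤ k) (hl : 1 ≤ l) (hM : 0 < M) (hkM : k ≤ 2 * M) :
    2 ^ (k / 2) * l ^ ((k / 2) * (1 + 1 / M)) ≤ (2 * l) ^ (k / 2) * (1 + k * (l - 1) / 2 / M) := by
  have hl0 : 0 < l := by linarith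
  have hsplit : l ^ ((k / 2) * (1 + 1 / M)) = l ^ (k / 2) * l ^ (k / (2 * M)) := by
    rw [← rpow_add hl0]
    congr 1
    field_simp
  have hbern : l ^ (k / (2 * M)) ≤ 1 + k * (l - 1) / 2 / M := by
    have h := rpow_le_one_add_mul_sub_one hl (p := k / (2 * M)) (by positivity)
      ((div_le_one (by positivity)).mpr hkM)
    exact h.trans_eq (by ring)
  calc 2 ^ (k / 2) * l ^ ((k / 2) * (1 + 1 / M))
      = (2 * l) ^ (k / 2) * l ^ (k / (2 * M)) := by
        rw [hsplit, mul_rpow zero_le_two hl0.le, mul_assoc]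
    _ ≤ (2 * l) ^ (k / 2) * (1 + k * (l - 1) / 2 / M) := by gcongr

theorem boundGap_nonneg (hk : 0 ≤ k) (hl : 2 ≤ l) :
    0 ≤ boundGap k l ((2 * l) ^ (k / 2) + k * (l - 1) / 2) := by
  have hB : k / 2 ≤ k * (l - 1) / 2 := by nlinarith
  have hA : 1 ≤ (2 * l) ^ (k / 2) := one_le_rpow (by linarith) (by positivity)
  set A := (2 * l) ^ (k / 2)
  set B := k * (l - 1) / 2
  have hM : 0 < A + B := by linarith
  have hAM : A / (A + B) ≤ 1 := (div_le_one hM).mpr (by linarith)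
  have hbound := two_rpow_mul_rpow_le (l := l) hk (by linarith) hM (by linarith)
  rw [boundGap, sub_nonneg]
  calc 2 ^ (k / 2) * l ^ ((k / 2) * (1 + 1 / (A + B)))
      ≤ A * (1 + B / (A + B)) := hbound
    _ = A + B * (A / (A + B)) := by ring
    _ ≤ A + B := by nlinarith

end

theorem analytic_step_general (N k l : ℝ) (hk : 1 ≤ k) (hl : 2 ≤ l)
    (h : N ≤ 2 ^ (k / 2) * l ^ ((k / 2) * (1 + 1 / N))) :
    N ≤ (2 * l) ^ (k / 2) + k * (l - 1) / 2 := by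
  have hA : 0 < (2 * l) ^ (k / 2) := rpow_pos_of_pos (by linarith) _
  have hB : 0 ≤ k * (l - 1) / 2 := by nlinarith
  have hN₁ : (0 : ℝ) < (2 * l) ^ (k / 2) + k * (l - 1) / 2 := by linarith
  by_contra! hlt
  have hmono := boundGap_strictMonoOn (k := k) (l := l) (by linarith) (by linarith)
    hN₁ (hN₁.trans hlt) hlt
  have hgap : boundGap k l N ≤ 0 := sub_nonpos.mpr h
  linarith [boundGap_nonneg (k := k) (by linarith) hl]

theorem analytic_step (N k l : ℝ) (hN : 1 ≤ N) (hk : 1 ≤ k) (hl : 2 ≤ l)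
    (h : N ≤ 2 ^ (k / 2) * l ^ ((k / 2) * (1 + 1 / N))) :
    N ≤ (2 * l) ^ (k / 2) + k * (l - 1) / 2 :=
  analytic_step_general N k l hk hl h
end
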